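/- Let d be a negative squarefree integer with d ≡ 1 mod 4 and ω_K = (1+√d)/2. Let β ∈ ℂ be written β = q₁ + q₂ω_K with q₁, q₂ ∈ ℝ, and let α = (α₁, α₂) ∈ ℝ². Then √((q₂ − α₁)² + (q₁ + q₂(ω_K + ω̄_K) − α₂)²) ≥ (1/√(−d)) · |β − α″|, where α″ = α₂ − α₁/2 + (α₁√(−d)/2)·i. -/

import Mathlib

/-! With `x = q₁ + q₂ - α₂`, `y = q₂ - α₁` and `s = √(-d)`, the difference `β - α″` equals
`(x - y/2) + (s y/2) i`. This real-linear image of `(x, y)` has length at most `s · |(x, y)|` as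
soon as `s² ≥ 4/3`, which holds since `-d ≥ 3`. -/

/-- The generator ω_K of the ring of integers: ω_K = (1+√d)/2 if d ≡ 1 (mod 4),
ω_K = √d otherwise, where √d = i√(-d). -/
noncomputable def omegaK (d : ℤ) : ℂ :=
  if d % 4 = 1 then (1 + Complex.I * Real.sqrt (-(d : ℝ))) / 2
  else Complex.I * Real.sqrt (-(d : ℝ))

open Complex

lemma omegaK_of_emod_four_eq_one {d : ℤ} (h4 : d % 4 = 1) :
    omegaK d = (1 + I * Real.sqrt (-(d : ℝ))) / 2 := if_pos h4

lemma omegaK_re_of_emod_four_eq_one {d : ℤ} (h4 : d % 4 = 1) : (omegaK d).re = 1 / 2 := by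
  simp [omegaK_of_emod_four_eq_one h4]

/-- The bound `4/3 ≤ s²` is sharp: the difference of squares is at least `(x + 3y/2)² / 3`. -/
lemma norm_sub_half_add_mul_I_le {s : ℝ} (hs0 : 0 ≤ s) (hs : 4 / 3 ≤ s ^ 2) (x y : ℝ) :
    ‖((x - y / 2 : ℝ) : ℂ) + ((s * y / 2 : ℝ) : ℂ) * I‖ ≤ s * Real.sqrt (y ^ 2 + x ^ 2) := by
  rw [norm_def, normSq_add_mul_I, Real.sqrt_le_iff, mul_pow, Real.sq_sqrt (by positivity)]
  refine ⟨by positivity, ?_⟩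
  nlinarith [sq_nonneg (x + 3 * y / 2), mul_nonneg (sub_nonneg.2 hs) (sq_nonneg x),
    mul_nonneg (sub_nonneg.2 hs) (sq_nonneg y)]

theorem dist_lower_bound_one_mod_four_general (d : ℤ) (hd : d < 0)
    (h4 : d % 4 = 1) (q₁ q₂ α₁ α₂ : ℝ) :
    (1 / Real.sqrt (-(d : ℝ))) *
      ‖(((q₁ : ℂ) + (q₂ : ℂ) * omegaK d) -
        (((α₂ - α₁ / 2 : ℝ) : ℂ) + ((α₁ * Real.sqrt (-(d : ℝ)) / 2 : ℝ) : ℂ) * Complex.I))‖ ≤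
    Real.sqrt ((q₂ - α₁) ^ 2 + (q₁ + q₂ * (2 * (omegaK d).re) - α₂) ^ 2) := by
  set s := Real.sqrt (-(d : ℝ))
  have hd3 : (d : ℝ) ≤ -3 := by exact_mod_cast (show d ≤ -3 by omega)
  have hs0 : 0 < s := Real.sqrt_pos.2 (by linarith)
  have hs : 4 / 3 ≤ s ^ 2 := by rw [Real.sq_sqrt (by linarith)]; linarith
  have hβ : ((q₁ : ℂ) + (q₂ : ℂ) * omegaK d) -
        (((α₂ - α₁ / 2 : ℝ) : ℂ) + ((α₁ * s / 2 : ℝ) : ℂ) * I) =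
      (((q₁ + q₂ - α₂) - (q₂ - α₁) / 2 : ℝ) : ℂ) + ((s * (q₂ - α₁) / 2 : ℝ) : ℂ) * I := by
    rw [omegaK_of_emod_four_eq_one h4]
    push_cast
    ring
  rw [hβ, omegaK_re_of_emod_four_eq_one h4, one_div, inv_mul_le_iff₀ hs0,
    show q₁ + q₂ * (2 * (1 / 2)) - α₂ = q₁ + q₂ - α₂ by ring]
  exact norm_sub_half_add_mul_I_le hs0.le hs (q₁ + q₂ - α₂) (q₂ - α₁)

/-- for d ≡ 1 (mod 4), β = q₁ + q₂ω_K and α = (α₁, α₂) ∈ ℝ²,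
√((q₂-α₁)² + (q₁ + q₂(ω_K + ω̄_K) - α₂)²) ≥ (1/√(-d))·|β - α″| where
α″ = α₂ - α₁/2 + (α₁√(-d)/2)i. -/
theorem dist_lower_bound_one_mod_four (d : ℤ) (hd : d < 0) (hsq : Squarefree d)
    (h4 : d % 4 = 1) (q₁ q₂ α₁ α₂ : ℝ) :
    (1 / Real.sqrt (-(d : ℝ))) *
      ‖(((q₁ : ℂ) + (q₂ : ℂ) * omegaK d) -
        (((α₂ - α₁ / 2 : ℝ) : ℂ) + ((α₁ * Real.sqrt (-(d : ℝ)) / 2 : ℝ) : ℂ) * Complex.I))‖ ≤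
    Real.sqrt ((q₂ - α₁) ^ 2 + (q₁ + q₂ * (2 * (omegaK d).re) - α₂) ^ 2) :=
  dist_lower_bound_one_mod_four_general d hd h4 q₁ q₂ α₁ α₂
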